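/- Let s ≥ 2 and let 1 ≤ k_1 ≤ k_2 ≤ ⋯ ≤ k_s < n and 1 < l_1 ≤ l_2 ≤ ⋯ ≤ l_s ≤ n satisfy k_i < l_i and l_i − k_i + 1 ≥ m for all i. Let f_1 = X_{1,k_1} X_{2,k_1+1} ⋯ X_{m,k_1+m−1} be the τ-largest diagonal monomial of Y_{k_1 l_1}. Then the colon ideal (J_{k_1 l_1} J_{k_2 l_2} ⋯ J_{k_s l_s} : f_1) equals J_{k_2 l_2} ⋯ J_{k_s l_s}. -/

import Mathlib

open MvPolynomial

/-- The exponent vector of the diagonal monomial with column sequence `c`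
(rows `1,…,m`, row `i` contributing the variable `X (i, c i)`). -/
noncomputable def expVec (m : ℕ) (c : ℕ → ℕ) : (ℕ × ℕ) →₀ ℕ :=
  ∑ i ∈ Finset.Icc 1 m, Finsupp.single (i, c i) 1

/-- The diagonal monomial `X_{1 c₁} X_{2 c₂} ⋯ X_{m c_m}`. -/
noncomputable def diagMon (K : Type*) [Field K] (m : ℕ) (c : ℕ → ℕ) :
    MvPolynomial (ℕ × ℕ) K :=
  ∏ i ∈ Finset.Icc 1 m, MvPolynomial.X (i, c i)

/-- `tauGt a b` : the monomial with exponent vector `a` is strictly larger than the one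
with exponent vector `b` in the lexicographic monomial order τ induced by
`X 11 > X 12 > ⋯ > X 1n > X 21 > ⋯ > X mn` : at the most significant variable where
they differ (i.e. the lexicographically smallest index pair), `a` has the bigger exponent. -/
def tauGt (a b : (ℕ × ℕ) →₀ ℕ) : Prop :=
  ∃ p : ℕ × ℕ, b p < a p ∧
    ∀ q : ℕ × ℕ, (q.1 < p.1 ∨ (q.1 = p.1 ∧ q.2 < p.2)) → a q = b q

/-- `c` is the column sequence of a diagonal monomial of the submatrix `Y_{kl}`
(columns `k` through `l`): strictly increasing on `1,…,m` with values in `[k,l]`. -/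
def IsDiagSeq (m k l : ℕ) (c : ℕ → ℕ) : Prop :=
  (∀ i, 1 ≤ i → i < m → c i < c (i + 1)) ∧ k ≤ c 1 ∧ c m ≤ l

/-- The ideal `J_{kl}` of `K[X]` generated by all diagonal monomials of `Y_{kl}`. -/
noncomputable def Jkl (K : Type*) [Field K] (m k l : ℕ) : Ideal (MvPolynomial (ℕ × ℕ) K) :=
  Ideal.span {g | ∃ c, IsDiagSeq m k l c ∧ g = diagMon K m c}

/-! All ideals involved are monomial, so the colon ideal can be computed on exponents: `x^a`
lies in it iff some product `g₁ ⋯ g_s` of diagonals, `g_j` from the window `[k_j, l_j]`,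
divides `x^a f₁`. As `k_j ≥ k₁` and diagonals are strictly increasing, a `g_j` containing the
variable `X_{i, k₁+i-1}` of `f₁` agrees with `f₁` in all rows up to `i`. Hence the variables of
`f₁` used by the `g_j` are all used by the single `g_{j₀}` agreeing with `f₁` longest, and
dropping `g_{j₀}` leaves a product dividing `x^a`. If `j₀ ≠ 1`, then `g₁` can take over the
window of `g_{j₀}`: `g_{j₀}` starts in column `k₁`, so `k_{j₀} = k₁`, and `l_{j₀} ≥ l₁`. -/

open Finset Pointwise

lemma sum_erase_le_of_cover {ι σ : Type*} [DecidableEq ι] {T : Finset ι} {e : ι → σ →₀ ℕ}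
    {a w : σ →₀ ℕ} {j₀ : ι} (hj₀ : j₀ ∈ T) (hle : ∑ j ∈ T, e j ≤ a + w)
    (hcover : ∀ v, w v ≤ e j₀ v ∨ ∀ j ∈ T, e j v = 0) : ∑ j ∈ T.erase j₀, e j ≤ a := by
  intro v
  have hv := hle v
  rw [← add_sum_erase T e hj₀] at hv
  simp only [Finsupp.add_apply, Finsupp.coe_finsetSum, Finset.sum_apply] at hv ⊢
  rcases hcover v with hw | hzero
  · omega
  · rw [sum_eq_zero fun j hj => hzero j (mem_of_mem_erase hj)]
    exact Nat.zero_le _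

lemma sum_Icc_two_comp_swap {M : Type*} [AddCommMonoid M] (f : ℕ → M) {s j₀ : ℕ}
    (hj₀ : j₀ ∈ Icc 1 s) :
    ∑ j ∈ Icc 2 s, f (Equiv.swap 1 j₀ j) = ∑ j ∈ (Icc 1 s).erase j₀, f j := by
  rw [mem_Icc] at hj₀
  refine sum_nbij' (Equiv.swap 1 j₀) (Equiv.swap 1 j₀) ?_ ?_ (by simp) (by simp) (by simp)
  all_goals
    intro j hj
    simp only [mem_erase, mem_Icc] at hj ⊢
    rw [Equiv.swap_apply_def]
    split_ifs <;> omega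

lemma apply_one_le_of_forall_le_succ {f : ℕ → ℕ} {s : ℕ}
    (hf : ∀ j, 1 ≤ j → j < s → f j ≤ f (j + 1)) {j : ℕ} (hj : j ∈ Icc 1 s) : f 1 ≤ f j := by
  obtain ⟨hj1, hjs⟩ := mem_Icc.1 hj
  clear hj
  induction j, hj1 using Nat.le_induction with
  | base => rfl
  | succ j hj ih => exact (ih (by omega)).trans (hf j hj (by omega))

section MonomialIdeal
variable {σ R : Type*} [CommSemiring R]

lemma prod_span_monomial_image {ι : Type*} (t : Finset ι) (A : ι → Set (σ →₀ ℕ)) :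
    ∏ j ∈ t, Ideal.span ((fun e => monomial e (1 : R)) '' A j) =
      Ideal.span ((fun e => monomial e (1 : R)) '' ∑ j ∈ t, A j) := by
  rw [Ideal.prod_span]
  congr 1
  -- a sum of sets of exponents is, definitionally, their product in `Multiplicative (σ →₀ ℕ)`
  exact (Set.image_finsetProd (monomialOneHom R σ) t
    (fun j => Multiplicative.toAdd ⁻¹' A j)).symm

lemma mem_colon_span_monomial_iff (A : Set (σ →₀ ℕ)) (w : σ →₀ ℕ) (p : MvPolynomial σ R) :
    p ∈ Submodule.colon (Ideal.span ((fun e => monomial e (1 : R)) '' A))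
      (Ideal.span {monomial w (1 : R)}) ↔ ∀ a ∈ p.support, ∃ e ∈ A, e ≤ a + w := by
  simp only [Ideal.mem_colon_span_singleton, mem_ideal_span_monomial_image,
    mem_support_iff, coeff_mul_monomial']
  constructor
  · intro h a ha
    apply h
    simpa using ha
  · intro h b hb
    split_ifs at hb with hwb
    · obtain ⟨e, he, hle⟩ := h _ (by simpa using hb)
      exact ⟨e, he, by rwa [tsub_add_cancel_of_le hwb] at hle⟩
    · exact absurd rfl hb

end MonomialIdeal

lemma diagMon_eq_monomial (K : Type*) [Field K] (m : ℕ) (c : ℕ → ℕ) :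
    diagMon K m c = monomial (expVec m c) 1 := by
  rw [diagMon, expVec, monomial_sum_one]
  rfl

lemma expVec_apply (m : ℕ) (c : ℕ → ℕ) (i x : ℕ) :
    expVec m c (i, x) = if i ∈ Icc 1 m ∧ c i = x then 1 else 0 := by
  classical
  simp only [expVec, Finsupp.coe_finsetSum, Finset.sum_apply, Finsupp.single_apply,
    Prod.mk.injEq]
  split_ifs with h
  · rw [sum_eq_single_of_mem i h.1 (fun b _ hbi => if_neg fun hb => hbi hb.1)]
    simp [h.2]
  · exact sum_eq_zero fun b hb => if_neg fun ⟨hbi, hbx⟩ => h ⟨hbi ▸ hb, hbi ▸ hbx⟩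

def diagExps (m k l : ℕ) : Set ((ℕ × ℕ) →₀ ℕ) :=
  expVec m '' {c | IsDiagSeq m k l c}

lemma Jkl_eq_span_monomial (K : Type*) [Field K] (m k l : ℕ) :
    Jkl K m k l = Ideal.span ((fun e => monomial e (1 : K)) '' diagExps m k l) := by
  rw [Jkl, diagExps, Set.image_image]
  congr 1
  ext g
  simp [diagMon_eq_monomial, eq_comm]

namespace IsDiagSeq

variable {m k l : ℕ} {c : ℕ → ℕ}

lemma add_sub_le (h : IsDiagSeq m k l c) {p q : ℕ} (hp : 1 ≤ p) (hpq : p ≤ q) (hq : q ≤ m) :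
    c p + (q - p) ≤ c q := by
  induction q, hpq using Nat.le_induction with
  | base => simp
  | succ q hpq ih =>
    have := ih (by omega)
    have := h.1 q (by omega) (by omega)
    omega

lemma eq_lead_of_le {k₀ : ℕ} (h : IsDiagSeq m k l c) (hk : k₀ ≤ k) {i i₀ : ℕ} (hi : 1 ≤ i)
    (hii₀ : i ≤ i₀) (hi₀ : i₀ ≤ m) (hc : c i₀ = k₀ + i₀ - 1) : c i = k₀ + i - 1 := by
  have := h.add_sub_le le_rfl hi (by omega)
  have := h.add_sub_le hi hii₀ hi₀
  have := h.2.1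
  omega

lemma mono {k' l' : ℕ} (h : IsDiagSeq m k l c) (hk : k' ≤ k)
    (hl : l ≤ l') : IsDiagSeq m k' l' c :=
  ⟨h.1, hk.trans h.2.1, h.2.2.trans hl⟩

end IsDiagSeq

/-- The last row in which `c` meets the leading diagonal `i ↦ k₀ + i - 1` (`0` if there is
none). For a diagonal of a window starting at a column `≥ k₀` the rows where it meets the
leading diagonal form an initial segment, so this is the length of that segment. -/
def agreeLen (m k₀ : ℕ) (c : ℕ → ℕ) : ℕ :=
  ((Icc 1 m).filter fun i => c i = k₀ + i - 1).sup id

lemma le_agreeLen {m k₀ i : ℕ} {c : ℕ → ℕ} (hi : i ∈ Icc 1 m) (hc : c i = k₀ + i - 1) :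
    i ≤ agreeLen m k₀ c :=
  le_sup (f := id) (mem_filter.2 ⟨hi, hc⟩)

lemma IsDiagSeq.eq_lead_of_le_agreeLen {m k l k₀ i : ℕ} {c : ℕ → ℕ} (h : IsDiagSeq m k l c)
    (hk : k₀ ≤ k) (hi : 1 ≤ i) (hit : i ≤ agreeLen m k₀ c) : c i = k₀ + i - 1 := by
  obtain ⟨i₀, hi₀, hii₀⟩ := Finset.lt_sup_iff.1 (show i - 1 < agreeLen m k₀ c by omega)
  obtain ⟨hi₀m, hci₀⟩ := mem_filter.1 hi₀
  exact h.eq_lead_of_le hk hi (by simp only [id] at hii₀; omega) (mem_Icc.1 hi₀m).2 hci₀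

lemma expVec_lead_covered {ι : Type*} {T : Finset ι} {m k₀ : ℕ} {k l : ι → ℕ}
    {d : ι → ℕ → ℕ} (hd : ∀ j ∈ T, IsDiagSeq m (k j) (l j) (d j)) (hk : ∀ j ∈ T, k₀ ≤ k j)
    {j₀ : ι} (hj₀ : j₀ ∈ T) (hmax : ∀ j ∈ T, agreeLen m k₀ (d j) ≤ agreeLen m k₀ (d j₀))
    (v : ℕ × ℕ) :
    expVec m (fun i => k₀ + i - 1) v ≤ expVec m (d j₀) v ∨ ∀ j ∈ T, expVec m (d j) v = 0 := by
  obtain ⟨i, x⟩ := v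
  simp only [expVec_apply]
  by_cases hlead : i ∈ Icc 1 m ∧ k₀ + i - 1 = x
  · by_cases hx : d j₀ i = x
    · exact Or.inl (by simp [hlead, hx])
    refine Or.inr fun j hj => if_neg fun ⟨hi, hdx⟩ => hx ?_
    have hij := (le_agreeLen hi (hdx.trans hlead.2.symm)).trans (hmax j hj)
    exact ((hd j₀ hj₀).eq_lead_of_le_agreeLen (hk j₀ hj₀) (mem_Icc.1 hi).1 hij).trans hlead.2
  · exact Or.inl (by rw [if_neg hlead]; exact Nat.zero_le _)

lemma exists_mem_sum_diagExps_tail_le {m s : ℕ} {k l : ℕ → ℕ} (hs : 1 ≤ s)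
    (hk : ∀ j ∈ Icc 1 s, k 1 ≤ k j) (hl : ∀ j ∈ Icc 1 s, l 1 ≤ l j)
    {a e : (ℕ × ℕ) →₀ ℕ} (he : e ∈ ∑ j ∈ Icc 1 s, diagExps m (k j) (l j))
    (hle : e ≤ a + expVec m (fun i => k 1 + i - 1)) :
    ∃ e' ∈ ∑ j ∈ Icc 2 s, diagExps m (k j) (l j), e' ≤ a := by
  classical
  obtain ⟨g, hg, rfl⟩ := (Set.mem_finsetSum _ _ _).1 he
  choose! d hd hdg using fun j (hj : j ∈ Icc 1 s) => hg hj
  rw [← sum_congr rfl hdg] at hle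
  have h1 : 1 ∈ Icc 1 s := mem_Icc.2 ⟨le_rfl, hs⟩
  set t := fun j => agreeLen m (k 1) (d j)
  obtain ⟨j₀, hj₀, hmax, hj₀_lead⟩ :
      ∃ j₀ ∈ Icc 1 s, (∀ j ∈ Icc 1 s, t j ≤ t j₀) ∧ (j₀ = 1 ∨ 1 ≤ t j₀) := by
    obtain ⟨j₁, hj₁, hmax⟩ := exists_max_image (Icc 1 s) t ⟨1, h1⟩
    by_cases ht : t j₁ ≤ t 1
    · exact ⟨1, h1, fun j hj => (hmax j hj).trans ht, Or.inl rfl⟩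
    · exact ⟨j₁, hj₁, hmax, Or.inr (by omega)⟩
  have hrest := sum_erase_le_of_cover hj₀ hle (expVec_lead_covered hd hk hj₀ hmax)
  refine ⟨∑ j ∈ Icc 2 s, expVec m (d (Equiv.swap 1 j₀ j)),
    Set.finsetSum_mem_finsetSum _ _ _ fun j hj => ⟨_, ?_, rfl⟩,
    by rwa [sum_Icc_two_comp_swap (fun j => expVec m (d j)) hj₀]⟩
  rw [mem_Icc] at hj
  rw [Equiv.swap_apply_def]
  split_ifs with hj1 hjj₀
  · omega
  · subst hjj₀
    have hstart : d j 1 = k 1 + 1 - 1 :=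
      (hd j hj₀).eq_lead_of_le_agreeLen (hk j hj₀) le_rfl (hj₀_lead.resolve_left hj1)
    exact (hd 1 h1).mono (by have := (hd j hj₀).2.1; have := (hd 1 h1).2.1; omega) (hl j hj₀)
  · exact hd j (mem_Icc.2 ⟨by omega, hj.2⟩)

theorem stmt_11_general (K : Type*) [Field K] (m s : ℕ) (hs : 2 ≤ s)
    (k l : ℕ → ℕ)
    (hkmono : ∀ j, 1 ≤ j → j < s → k j ≤ k (j + 1))
    (hlmono : ∀ j, 1 ≤ j → j < s → l j ≤ l (j + 1))
    (hkl : ∀ j, 1 ≤ j → j ≤ s → k j < l j)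
    (hlen : ∀ j, 1 ≤ j → j ≤ s → m ≤ l j - k j + 1) :
    Submodule.colon (∏ j ∈ Finset.Icc 1 s, Jkl K m (k j) (l j))
        (Ideal.span {diagMon K m (fun i => k 1 + i - 1)}) =
      ∏ j ∈ Finset.Icc 2 s, Jkl K m (k j) (l j) := by
  apply le_antisymm
  · intro p hp
    simp only [Jkl_eq_span_monomial, prod_span_monomial_image, diagMon_eq_monomial,
      mem_colon_span_monomial_iff] at hp
    simp only [Jkl_eq_span_monomial, prod_span_monomial_image, mem_ideal_span_monomial_image]
    intro a ha
    obtain ⟨e, he, hle⟩ := hp a ha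
    exact exists_mem_sum_diagExps_tail_le (by omega)
      (fun _ => apply_one_le_of_forall_le_succ hkmono)
      (fun _ => apply_one_le_of_forall_le_succ hlmono) he hle
  · intro p hp
    have hlead : IsDiagSeq m (k 1) (l 1) (fun i => k 1 + i - 1) := by
      have := hkl 1 le_rfl (by omega)
      have := hlen 1 le_rfl (by omega)
      refine ⟨fun i hi _ => ?_, ?_, ?_⟩ <;> dsimp only <;> omega
    rw [Ideal.mem_colon_span_singleton,
      ← Finset.insert_Icc_add_one_left_eq_Icc (by omega : 1 ≤ s), prod_insert (by simp)]
    exact mul_comm p _ ▸ Ideal.mul_mem_mul (Ideal.subset_span ⟨_, hlead, rfl⟩) hp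

/-- Let `s ≥ 2`, `1 ≤ k₁ ≤ ⋯ ≤ k_s < n`, `1 < l₁ ≤ ⋯ ≤ l_s ≤ n` with
`k_i < l_i`, `l_i - k_i + 1 ≥ m`.  Let
`f₁ = X_{1,k₁} X_{2,k₁+1} ⋯ X_{m,k₁+m-1}` be the τ-largest diagonal monomial of
`Y_{k₁l₁}` (column sequence `i ↦ k₁ + i - 1`).  Then
`(J_{k₁l₁} J_{k₂l₂} ⋯ J_{k_sl_s} : f₁) = J_{k₂l₂} ⋯ J_{k_sl_s}`. -/
theorem stmt_11 (K : Type*) [Field K] (m n s : ℕ) (hm : 1 ≤ m) (hmn : m ≤ n) (hs : 2 ≤ s)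
    (k l : ℕ → ℕ)
    (hk1 : 1 ≤ k 1) (hkmono : ∀ j, 1 ≤ j → j < s → k j ≤ k (j + 1)) (hks : k s < n)
    (hl1 : 1 < l 1) (hlmono : ∀ j, 1 ≤ j → j < s → l j ≤ l (j + 1)) (hls : l s ≤ n)
    (hkl : ∀ j, 1 ≤ j → j ≤ s → k j < l j)
    (hlen : ∀ j, 1 ≤ j → j ≤ s → m ≤ l j - k j + 1) :
    Submodule.colon (∏ j ∈ Finset.Icc 1 s, Jkl K m (k j) (l j))
        (Ideal.span {diagMon K m (fun i => k 1 + i - 1)}) =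
      ∏ j ∈ Finset.Icc 2 s, Jkl K m (k j) (l j) :=
  stmt_11_general K m s hs k l hkmono hlmono hkl hlen
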